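/- arXiv:2308.09191 — 5 statements merged into one kernel-verified Lean document; each statement's English description precedes it below -/
import Mathlib

section
/- The decision version of the MTR problem is NP-hard: 3-dimensional matching with |A| = |B| = |C| = q reduces in polynomial time to the problem of deciding whether the hypergraph ILP for MTR (maximize total number of riders covered by pairwise disjoint feasible matches where each driver has capacity 2) achieves objective value at least 2q. Specifically, an instance (A, B, C, F) of 3DM with |A|=|B|=|C|=q has a perfect matching M ⊆ F with |M| = q if and only if the constructed MTR instance (drivers D = A, riders R = B ∪ C, hyperedges e(f) = {a,b,c} plus sub-edges {a,b} and {a,c} for each f = (a,b,c) ∈ F) has a set of pairwise disjoint hyperedges covering exactly 2q riders. -/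
/-- Hyperedges of the MTR instance constructed from a 3DM instance:
for each triple `(a,b,c) ∈ F` include `({a},{b,c})`, `({a},{b})`, `({a},{c})`. -/
def mtrEdges {A B C : Type*} [DecidableEq A] [DecidableEq B] [DecidableEq C]
    (F : Finset (A × B × C)) : Finset (A × Finset (B ⊕ C)) :=
  F.biUnion (fun f =>
    {(f.1, ({Sum.inl f.2.1, Sum.inr f.2.2} : Finset (B ⊕ C))),
     (f.1, ({Sum.inl f.2.1} : Finset (B ⊕ C))),
     (f.1, ({Sum.inr f.2.2} : Finset (B ⊕ C)))})

private lemma pairCard {B C : Type*} [DecidableEq B] [DecidableEq C] (b : B) (c : C) :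
    ({Sum.inl b, Sum.inr c} : Finset (B ⊕ C)).card = 2 := by
  rw [Finset.card_insert_of_notMem (by simp), Finset.card_singleton]

private lemma mem_mtrEdges {A B C : Type*} [DecidableEq A] [DecidableEq B] [DecidableEq C]
    {F : Finset (A × B × C)} {e : A × Finset (B ⊕ C)} :
    e ∈ mtrEdges F ↔ ∃ f ∈ F,
      e = (f.1, ({Sum.inl f.2.1, Sum.inr f.2.2} : Finset (B ⊕ C))) ∨
      e = (f.1, ({Sum.inl f.2.1} : Finset (B ⊕ C))) ∨
      e = (f.1, ({Sum.inr f.2.2} : Finset (B ⊕ C))) := by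
  simp [mtrEdges, Finset.mem_insert]

/-- 3DM reduces to MTR: there is a perfect 3-dimensional matching of size `q`
iff the constructed MTR instance has a set of pairwise disjoint hyperedges
covering exactly `2q` riders. -/
theorem stmt2 {A B C : Type*} [Fintype A] [Fintype B] [Fintype C]
    [DecidableEq A] [DecidableEq B] [DecidableEq C] (q : ℕ)
    (hA : Fintype.card A = q) (hB : Fintype.card B = q) (hC : Fintype.card C = q)
    (F : Finset (A × B × C)) :
    (∃ M ⊆ F, (∀ f ∈ M, ∀ f' ∈ M, f ≠ f' →
        f.1 ≠ f'.1 ∧ f.2.1 ≠ f'.2.1 ∧ f.2.2 ≠ f'.2.2) ∧ M.card = q)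
    ↔
    (∃ X ⊆ mtrEdges F, (∀ e ∈ X, ∀ e' ∈ X, e ≠ e' →
        e.1 ≠ e'.1 ∧ Disjoint e.2 e'.2) ∧ ∑ e ∈ X, e.2.card = 2 * q) := by
  set g : A × B × C → A × Finset (B ⊕ C) :=
    fun f => (f.1, ({Sum.inl f.2.1, Sum.inr f.2.2} : Finset (B ⊕ C))) with hg
  have hginj : Function.Injective g := by
    rintro ⟨a, b, c⟩ ⟨a', b', c'⟩ h
    simp only [hg, Prod.mk.injEq] at h
    obtain ⟨h1, h2⟩ := h
    have hb : (Sum.inl b : B ⊕ C) ∈ ({Sum.inl b', Sum.inr c'} : Finset (B ⊕ C)) := by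
      rw [← h2]; simp
    have hc : (Sum.inr c : B ⊕ C) ∈ ({Sum.inl b', Sum.inr c'} : Finset (B ⊕ C)) := by
      rw [← h2]; simp
    simp only [Finset.mem_insert, Finset.mem_singleton] at hb hc
    rcases hb with hb | hb
    · rcases hc with hc | hc
      · exact absurd hc (by simp)
      · simp_all
    · exact absurd hb (by simp)
  constructor
  · rintro ⟨M, hMF, hMdisj, hMcard⟩
    refine ⟨M.image g, ?_, ?_, ?_⟩
    · intro e he
      rw [Finset.mem_image] at he
      obtain ⟨f, hf, rfl⟩ := he
      rw [mem_mtrEdges]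
      exact ⟨f, hMF hf, Or.inl rfl⟩
    · intro e he e' he' hne
      rw [Finset.mem_image] at he he'
      obtain ⟨f, hf, rfl⟩ := he
      obtain ⟨f', hf', rfl⟩ := he'
      have hff' : f ≠ f' := fun h => hne (by rw [h])
      obtain ⟨h1, h2, h3⟩ := hMdisj f hf f' hf' hff'
      refine ⟨h1, ?_⟩
      rw [Finset.disjoint_left]
      intro x hx hx'
      simp only [hg, Finset.mem_insert, Finset.mem_singleton] at hx hx'
      rcases hx with rfl | rfl <;> rcases hx' with h | h <;> simp_all
    · rw [Finset.sum_image (fun x _ y _ h => hginj h)]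
      have : ∀ f ∈ M, (g f).2.card = 2 := fun f _ => pairCard f.2.1 f.2.2
      rw [Finset.sum_congr rfl this, Finset.sum_const, hMcard, smul_eq_mul, mul_comm]
  · rintro ⟨X, hXE, hXdisj, hXsum⟩
    -- drivers are injective on X
    have hfst : Set.InjOn Prod.fst (X : Set (A × Finset (B ⊕ C))) := by
      intro e he e' he' h
      by_contra hne
      exact (hXdisj e he e' he' hne).1 h
    have hXle : X.card ≤ q := by
      have h1 : (X.image Prod.fst).card = X.card := Finset.card_image_of_injOn hfst
      have h2 : (X.image Prod.fst).card ≤ q := by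
        simpa [Finset.card_univ, hA] using Finset.card_le_univ (X.image Prod.fst)
      omega
    have hcardle : ∀ e ∈ X, e.2.card ≤ 2 := by
      intro e he
      obtain ⟨f, _, h | h | h⟩ := mem_mtrEdges.mp (hXE he) <;>
        subst h <;> simp [pairCard]
    have hsumle : ∑ e ∈ X, e.2.card ≤ 2 * X.card := by
      calc ∑ e ∈ X, e.2.card ≤ ∑ _e ∈ X, 2 := Finset.sum_le_sum hcardle
        _ = 2 * X.card := by rw [Finset.sum_const, smul_eq_mul, mul_comm]
    have hXcard : X.card = q := by omega
    have hsum2 : ∑ e ∈ X, e.2.card = ∑ _e ∈ X, 2 := by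
      rw [Finset.sum_const, smul_eq_mul, hXcard, mul_comm] at *
      omega
    have hall2 : ∀ e ∈ X, e.2.card = 2 :=
      fun e he => (Finset.sum_eq_sum_iff_of_le hcardle).mp hsum2 e he
    have hform : ∀ e ∈ X, ∃ f ∈ F, e = g f := by
      intro e he
      obtain ⟨f, hf, h | h | h⟩ := mem_mtrEdges.mp (hXE he)
      · exact ⟨f, hf, h⟩
      · exact absurd (hall2 e he) (by subst h; simp)
      · exact absurd (hall2 e he) (by subst h; simp)
    set M : Finset (A × B × C) := F.filter (fun f => g f ∈ X) with hM
    have hXM : X = M.image g := by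
      ext e
      constructor
      · intro he
        obtain ⟨f, hf, rfl⟩ := hform e he
        exact Finset.mem_image_of_mem g (Finset.mem_filter.mpr ⟨hf, he⟩)
      · intro he
        obtain ⟨f, hf, rfl⟩ := Finset.mem_image.mp he
        exact (Finset.mem_filter.mp hf).2
    refine ⟨M, Finset.filter_subset _ _, ?_, ?_⟩
    · intro f hf f' hf' hne
      have he : g f ∈ X := (Finset.mem_filter.mp hf).2
      have he' : g f' ∈ X := (Finset.mem_filter.mp hf').2
      have hgne : g f ≠ g f' := fun h => hne (hginj h)
      obtain ⟨h1, h2⟩ := hXdisj _ he _ he' hgne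
      refine ⟨h1, ?_, ?_⟩
      · intro hb
        have hm : (Sum.inl f.2.1 : B ⊕ C) ∈ (g f).2 := by simp [hg]
        have hm' : (Sum.inl f.2.1 : B ⊕ C) ∈ (g f').2 := by simp [hg, hb]
        exact Finset.disjoint_left.mp h2 hm hm'
      · intro hc
        have hm : (Sum.inr f.2.2 : B ⊕ C) ∈ (g f).2 := by simp [hg]
        have hm' : (Sum.inr f.2.2 : B ⊕ C) ∈ (g f').2 := by simp [hg, hc]
        exact Finset.disjoint_left.mp h2 hm hm'
    · rw [← hXcard, hXM, Finset.card_image_of_injective _ hginj]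
end

section
/- In the 3DM-to-MTR reduction with |A|=|B|=|C|=q, if a set X of pairwise disjoint hyperedges in the constructed instance covers 2q riders, then every hyperedge in X must contain exactly two riders and |X| = q, and the corresponding triples form a perfect 3-dimensional matching. -/
lemma mtr_card_le {A B C : Type*} [DecidableEq A] [DecidableEq B] [DecidableEq C]
    {F : Finset (A × B × C)} {e : A × Finset (B ⊕ C)} (he : e ∈ mtrEdges F) :
    e.2.card ≤ 2 := by
  simp only [mtrEdges, Finset.mem_biUnion, Finset.mem_insert, Finset.mem_singleton] at he
  obtain ⟨f, _, h | h | h⟩ := he <;> subst h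
  · exact Finset.card_insert_le _ _
  · simp
  · simp

lemma mtr_card_two {A B C : Type*} [DecidableEq A] [DecidableEq B] [DecidableEq C]
    {F : Finset (A × B × C)} {e : A × Finset (B ⊕ C)} (he : e ∈ mtrEdges F)
    (h2 : e.2.card = 2) :
    ∃ f ∈ F, e = (f.1, ({Sum.inl f.2.1, Sum.inr f.2.2} : Finset (B ⊕ C))) := by
  simp only [mtrEdges, Finset.mem_biUnion, Finset.mem_insert, Finset.mem_singleton] at he
  obtain ⟨f, hf, h | h | h⟩ := he
  · exact ⟨f, hf, h⟩
  · subst h; simp at h2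
  · subst h; simp at h2

/-- In the 3DM-to-MTR reduction, a pairwise disjoint set `X` of hyperedges
covering `2q` riders must consist of `q` hyperedges, each with exactly two
riders, and the corresponding triples form a perfect 3-dimensional matching. -/
theorem stmt3 {A B C : Type*} [Fintype A] [Fintype B] [Fintype C]
    [DecidableEq A] [DecidableEq B] [DecidableEq C] (q : ℕ)
    (hA : Fintype.card A = q) (hB : Fintype.card B = q) (hC : Fintype.card C = q)
    (F : Finset (A × B × C))
    (X : Finset (A × Finset (B ⊕ C))) (hX : X ⊆ mtrEdges F)
    (hdisj : ∀ e ∈ X, ∀ e' ∈ X, e ≠ e' → e.1 ≠ e'.1 ∧ Disjoint e.2 e'.2)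
    (hval : ∑ e ∈ X, e.2.card = 2 * q) :
    (∀ e ∈ X, e.2.card = 2) ∧ X.card = q ∧
    ∃ M ⊆ F, (∀ f ∈ M, ∀ f' ∈ M, f ≠ f' →
        f.1 ≠ f'.1 ∧ f.2.1 ≠ f'.2.1 ∧ f.2.2 ≠ f'.2.2) ∧ M.card = q ∧
      ∀ f ∈ M, (f.1, ({Sum.inl f.2.1, Sum.inr f.2.2} : Finset (B ⊕ C))) ∈ X := by
  -- drivers are distinct, so X.card ≤ q
  have hinj : Set.InjOn Prod.fst (X : Set (A × Finset (B ⊕ C))) := by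
    intro e he e' he' h
    by_contra hne
    exact (hdisj e he e' he' hne).1 h
  have hXle : X.card ≤ q := by
    calc X.card = (X.image Prod.fst).card := (Finset.card_image_of_injOn hinj).symm
    _ ≤ Fintype.card A := Finset.card_le_univ _ |>.trans (le_of_eq rfl)
    _ = q := hA
  have hsumle : ∑ e ∈ X, e.2.card ≤ 2 * X.card := by
    calc ∑ e ∈ X, e.2.card ≤ ∑ _e ∈ X, 2 :=
      Finset.sum_le_sum (fun e he => mtr_card_le (hX he))
    _ = 2 * X.card := by rw [Finset.sum_const, smul_eq_mul, mul_comm]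
  have hXq : X.card = q := by omega
  have hcard2 : ∀ e ∈ X, e.2.card = 2 := by
    by_contra h
    push_neg at h
    obtain ⟨e, he, hne⟩ := h
    have hlt : ∑ e ∈ X, e.2.card < ∑ _e ∈ X, 2 :=
      Finset.sum_lt_sum (fun e he => mtr_card_le (hX he))
        ⟨e, he, lt_of_le_of_ne (mtr_card_le (hX he)) hne⟩
    rw [Finset.sum_const, smul_eq_mul] at hlt
    omega
  refine ⟨hcard2, hXq, ?_⟩
  set g : A × B × C → A × Finset (B ⊕ C) :=
    fun f => (f.1, ({Sum.inl f.2.1, Sum.inr f.2.2} : Finset (B ⊕ C))) with hg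
  have hginj : Function.Injective g := by
    intro f f' h
    simp only [hg, Prod.mk.injEq] at h
    obtain ⟨h1, h2⟩ := h
    have hb : (Sum.inl f.2.1 : B ⊕ C) ∈ ({Sum.inl f'.2.1, Sum.inr f'.2.2} : Finset (B ⊕ C)) := by
      rw [← h2]; simp
    have hc : (Sum.inr f.2.2 : B ⊕ C) ∈ ({Sum.inl f'.2.1, Sum.inr f'.2.2} : Finset (B ⊕ C)) := by
      rw [← h2]; simp
    simp only [Finset.mem_insert, Finset.mem_singleton] at hb hc
    rcases hb with hb | hb
    · rcases hc with hc | hc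
      · exact absurd hc (by simp)
      · have : f.2 = f'.2 := Prod.ext (Sum.inl.injEq _ _ ▸ by injection hb) (by injection hc)
        exact Prod.ext h1 this
    · exact absurd hb (by simp)
  set M : Finset (A × B × C) := F.filter (fun f => g f ∈ X) with hM
  have hMX : ∀ f ∈ M, g f ∈ X := fun f hf => (Finset.mem_filter.mp hf).2
  have himg : M.image g = X := by
    apply Finset.Subset.antisymm
    · intro e he
      obtain ⟨f, hf, rfl⟩ := Finset.mem_image.mp he
      exact hMX f hf
    · intro e he
      obtain ⟨f, hfF, hef⟩ := mtr_card_two (hX he) (hcard2 e he)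
      refine Finset.mem_image.mpr ⟨f, ?_, hef.symm⟩
      exact Finset.mem_filter.mpr ⟨hfF, by simpa [hg, ← hef] using he⟩
  have hMcard : M.card = q := by
    rw [← hXq, ← himg, Finset.card_image_of_injective _ hginj]
  refine ⟨M, Finset.filter_subset _ _, ?_, hMcard, hMX⟩
  intro f hf f' hf' hne
  have hgne : g f ≠ g f' := fun h => hne (hginj h)
  have hd := hdisj (g f) (hMX f hf) (g f') (hMX f' hf') hgne
  refine ⟨hd.1, ?_, ?_⟩
  · intro h
    have : (Sum.inl f.2.1 : B ⊕ C) ∈ (g f).2 ∩ (g f').2 := by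
      simp [hg, h]
    rw [Finset.disjoint_iff_inter_eq_empty.mp hd.2] at this
    · exact absurd this (Finset.notMem_empty _)
  · intro h
    have : (Sum.inr f.2.2 : B ⊕ C) ∈ (g f).2 ∩ (g f').2 := by
      simp [hg, h]
    rw [Finset.disjoint_iff_inter_eq_empty.mp hd.2] at this
    · exact absurd this (Finset.notMem_empty _)
end

section
/- Let Σ = {x_1, …, x_a} be the matches selected by the greedy algorithm (in order, each x_i maximizing the number of riders among hyperedges vertex-disjoint from previously selected ones), and let OPT be any set of pairwise disjoint hyperedges. For any optimal hyperedge y_i sharing its driver with x_i (i.e., D(y_i) = D(x_i)), the number of riders of y_i not covered by the first i−1 greedy matches is at most the number of riders of x_i: |R(y_i) \ R(Σ_{i−1})| ≤ |R(x_i)|, where Σ_{i−1} = {x_1, …, x_{i−1}} and R(·) denotes the union of rider sets. -/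
/-- Per-step greedy lemma: if `x i` is the `i`-th greedy match (maximizing the
rider count among hyperedges disjoint from the previously selected ones) and
`y` is a hyperedge with the same driver as `x i`, then the riders of `y` not
covered by the first `i - 1` greedy matches number at most `|R(x i)|`. -/
theorem stmt5 {ι ρ : Type*} [DecidableEq ι] [DecidableEq ρ]
    (F : Finset (ι × Finset ρ))
    (hne : ∀ e ∈ F, e.2 ≠ ∅)
    (hdc : ∀ e ∈ F, ∀ J' ⊆ e.2, J' ≠ ∅ → (e.1, J') ∈ F)
    (a : ℕ) (x : Fin a → ι × Finset ρ)
    (hxF : ∀ i, x i ∈ F)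
    (hdist : ∀ i j : Fin a, i ≠ j → (x i).1 ≠ (x j).1)
    (hgreedy : ∀ i : Fin a, ∀ e ∈ F,
      (∀ b : Fin a, b < i → e.1 ≠ (x b).1 ∧ Disjoint e.2 (x b).2) →
      e.2.card ≤ (x i).2.card)
    (i : Fin a) (y : ι × Finset ρ) (hy : y ∈ F) (hyd : y.1 = (x i).1) :
    (y.2 \ (Finset.univ.filter (· < i)).biUnion (fun b => (x b).2)).card
      ≤ (x i).2.card := by
  set J' := y.2 \ (Finset.univ.filter (· < i)).biUnion (fun b => (x b).2) with hJ'
  by_cases h : J' = ∅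
  · simp [h]
  · have hmem : (y.1, J') ∈ F := hdc y hy J' (Finset.sdiff_subset) h
    have := hgreedy i (y.1, J') hmem ?_
    · simpa using this
    · intro b hb
      constructor
      · simp only [hyd]
        exact hdist i b (fun hib => lt_irrefl i (hib ▸ hb))
      · simp only
        refine Finset.disjoint_left.mpr ?_
        intro r hr hrb
        rw [hJ', Finset.mem_sdiff] at hr
        exact hr.2 (Finset.mem_biUnion.mpr ⟨b, by simp [hb], hrb⟩)
end

section
/- Let Σ be the set of matches selected by the greedy algorithm and OPT an optimal set of pairwise disjoint feasible matches. Every hyperedge y ∈ OPT whose driver is not the driver of any greedy match satisfies R(y) ⊆ R(Σ); i.e., all its riders are covered by the greedy solution. -/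
/-- Every optimal hyperedge whose driver is unused by the (maximal) greedy
solution has all of its riders covered by the greedy solution. -/
theorem stmt6 {ι ρ : Type*} [DecidableEq ι] [DecidableEq ρ]
    (F : Finset (ι × Finset ρ))
    (hne : ∀ e ∈ F, e.2 ≠ ∅)
    (hdc : ∀ e ∈ F, ∀ J' ⊆ e.2, J' ≠ ∅ → (e.1, J') ∈ F)
    (G : Finset (ι × Finset ρ)) (hGF : G ⊆ F)
    (hGdisj : ∀ e ∈ G, ∀ e' ∈ G, e ≠ e' → e.1 ≠ e'.1 ∧ Disjoint e.2 e'.2)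
    (hGmax : ∀ e ∈ F, ¬ (∀ g ∈ G, e.1 ≠ g.1 ∧ Disjoint e.2 g.2))
    (OPT : Finset (ι × Finset ρ)) (hOF : OPT ⊆ F)
    (hOdisj : ∀ e ∈ OPT, ∀ e' ∈ OPT, e ≠ e' → e.1 ≠ e'.1 ∧ Disjoint e.2 e'.2)
    (y : ι × Finset ρ) (hy : y ∈ OPT)
    (hdr : ∀ g ∈ G, y.1 ≠ g.1) :
    y.2 ⊆ G.biUnion Prod.snd := by
  intro r hr
  by_contra hrG
  have hyF : y ∈ F := hOF hy
  have heF : (y.1, ({r} : Finset ρ)) ∈ F :=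
    hdc y hyF {r} (Finset.singleton_subset_iff.mpr hr) (Finset.singleton_ne_empty r)
  refine hGmax _ heF ?_
  intro g hg
  refine ⟨hdr g hg, ?_⟩
  simp only [Finset.disjoint_singleton_left]
  intro hrg
  exact hrG (Finset.mem_biUnion.mpr ⟨g, hg, hrg⟩)
end

section
/- The greedy algorithm ImpGreedy is a 1/2-approximation for the MTR problem: if Σ is the greedy solution and OPT an optimal set of pairwise disjoint feasible matches in a downward-closed bipartite hypergraph, then |R(OPT)| ≤ 2·|R(Σ)|. -/
set_option maxHeartbeats 1000000 in
/-- ImpGreedy is a 1/2-approximation for the MTR problem: the riders covered by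
any pairwise disjoint set of feasible matches number at most twice the riders
covered by the greedy solution `x 0, …, x (a-1)`. -/
theorem stmt7 {ι ρ : Type*} [DecidableEq ι] [DecidableEq ρ]
    (F : Finset (ι × Finset ρ))
    (hne : ∀ e ∈ F, e.2 ≠ ∅)
    (hdc : ∀ e ∈ F, ∀ J' ⊆ e.2, J' ≠ ∅ → (e.1, J') ∈ F)
    (a : ℕ) (x : Fin a → ι × Finset ρ)
    (hxF : ∀ i, x i ∈ F)
    (hxdisj : ∀ i j : Fin a, i ≠ j → (x i).1 ≠ (x j).1 ∧ Disjoint (x i).2 (x j).2)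
    (hgreedy : ∀ i : Fin a, ∀ e ∈ F,
      (∀ b : Fin a, b < i → e.1 ≠ (x b).1 ∧ Disjoint e.2 (x b).2) →
      e.2.card ≤ (x i).2.card)
    (hmax : ∀ e ∈ F, ¬ (∀ i : Fin a, e.1 ≠ (x i).1 ∧ Disjoint e.2 (x i).2))
    (OPT : Finset (ι × Finset ρ)) (hOF : OPT ⊆ F)
    (hOdisj : ∀ e ∈ OPT, ∀ e' ∈ OPT, e ≠ e' → e.1 ≠ e'.1 ∧ Disjoint e.2 e'.2) :
    (OPT.biUnion Prod.snd).card
      ≤ 2 * ((Finset.univ : Finset (Fin a)).biUnion (fun i => (x i).2)).card := by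
  classical
  set S := (Finset.univ : Finset (Fin a)).biUnion (fun i => (x i).2) with hS
  rcases Nat.eq_zero_or_pos a with ha | ha
  · subst ha
    have hO : OPT = ∅ := by
      by_contra h
      obtain ⟨e, he⟩ := Finset.nonempty_iff_ne_empty.mpr h
      exact hmax e (hOF he) (fun i => i.elim0)
    simp [hO]
  have hScard : S.card = ∑ i, (x i).2.card :=
    Finset.card_biUnion (fun i _ j _ hij => (hxdisj i j hij).2)
  have hOcard : (OPT.biUnion Prod.snd).card = ∑ e ∈ OPT, e.2.card :=
    Finset.card_biUnion (fun e he e' he' hne' => (hOdisj e he e' he' hne').2)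
  have h1 : ∑ e ∈ OPT, (e.2 ∩ S).card ≤ S.card := by
    rw [← Finset.card_biUnion (fun e he e' he' hne' =>
      Finset.disjoint_of_subset_left Finset.inter_subset_left
        (Finset.disjoint_of_subset_right Finset.inter_subset_left
          ((hOdisj e he e' he' hne').2)))]
    exact Finset.card_le_card (Finset.biUnion_subset.mpr fun e _ => Finset.inter_subset_right)
  -- key lemma
  have key : ∀ e ∈ OPT, (e.2 \ S).Nonempty →
      ∃ i : Fin a, e.1 = (x i).1 ∧ (e.2 \ S).card ≤ (x i).2.card := by
    intro e he hne'
    have heF' : (e.1, e.2 \ S) ∈ F :=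
      hdc e (hOF he) _ (Finset.sdiff_subset) (Finset.nonempty_iff_ne_empty.mp hne')
    have hsub : ∀ i : Fin a, (x i).2 ⊆ S := fun i => by
      rw [hS]; exact Finset.subset_biUnion_of_mem (fun j => (x j).2) (Finset.mem_univ i)
    have hdisjS : ∀ i : Fin a, Disjoint (e.2 \ S) (x i).2 := fun i =>
      Finset.disjoint_of_subset_right (hsub i) Finset.sdiff_disjoint
    obtain ⟨i, hi⟩ := not_forall.mp (hmax _ heF')
    have hdriver : e.1 = (x i).1 := by
      by_contra hd
      exact hi ⟨hd, hdisjS i⟩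
    refine ⟨i, hdriver, ?_⟩
    refine hgreedy i (e.1, e.2 \ S) heF' (fun b hb => ⟨?_, hdisjS b⟩)
    have : (x i).1 ≠ (x b).1 := (hxdisj i b (fun h => absurd h.symm (ne_of_lt hb))).1
    simpa [hdriver] using this
  set OPT' := OPT.filter (fun e => (e.2 \ S).Nonempty) with hOPT'
  have hsum_filter : ∑ e ∈ OPT', (e.2 \ S).card = ∑ e ∈ OPT, (e.2 \ S).card := by
    apply Finset.sum_filter_of_ne
    intro e _ h
    exact Finset.card_pos.mp (Nat.pos_of_ne_zero h)
  set I : ι × Finset ρ → Fin a := fun e =>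
    if h : ∃ i : Fin a, e.1 = (x i).1 ∧ (e.2 \ S).card ≤ (x i).2.card then h.choose
    else ⟨0, ha⟩ with hI
  have hIspec : ∀ e ∈ OPT', e.1 = (x (I e)).1 ∧ (e.2 \ S).card ≤ (x (I e)).2.card := by
    intro e he
    rw [Finset.mem_filter] at he
    have h := key e he.1 he.2
    simp only [hI, dif_pos h]
    exact h.choose_spec
  have hinj : Set.InjOn I OPT' := by
    intro e he e' he' heq
    by_contra hne2
    have h1 := (hIspec e he).1
    have h2 := (hIspec e' he').1
    exact (hOdisj e (Finset.mem_filter.mp he).1 e' (Finset.mem_filter.mp he').1 hne2).1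
      (by rw [h1, h2, heq])
  have h2 : ∑ e ∈ OPT, (e.2 \ S).card ≤ S.card := by
    rw [← hsum_filter, hScard]
    calc ∑ e ∈ OPT', (e.2 \ S).card ≤ ∑ e ∈ OPT', (x (I e)).2.card :=
          Finset.sum_le_sum (fun e he => (hIspec e he).2)
      _ = ∑ j ∈ OPT'.image I, (x j).2.card := by
          rw [Finset.sum_image (fun e he e' he' h => hinj he he' h)]
      _ ≤ ∑ j, (x j).2.card := Finset.sum_le_sum_of_subset (Finset.subset_univ _)
  calc (OPT.biUnion Prod.snd).card = ∑ e ∈ OPT, e.2.card := hOcard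
    _ = ∑ e ∈ OPT, ((e.2 ∩ S).card + (e.2 \ S).card) := by
        refine Finset.sum_congr rfl (fun e _ => ?_)
        exact (Finset.card_inter_add_card_sdiff e.2 S).symm
    _ = (∑ e ∈ OPT, (e.2 ∩ S).card) + ∑ e ∈ OPT, (e.2 \ S).card := Finset.sum_add_distrib
    _ ≤ S.card + S.card := Nat.add_le_add h1 h2
    _ = 2 * S.card := (two_mul _).symm
end
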